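/- Let f and g be homogeneous polynomials of degrees r and s respectively in the variables (x,y) ∈ ℝ^{2N}. Then the Poisson bracket {f,g} is a homogeneous polynomial of degree r+s−2 and satisfies ‖{f,g}‖ ≤ r s ‖f‖ ‖g‖. Moreover {f, g^⊕} is a seed of {f^⊕, g^⊕} and satisfies ‖{f, g^⊕}‖ ≤ r s ‖f‖ ‖g‖. -/

import Mathlib

open MvPolynomial

/-- Polynomials in the `2N` phase-space variables: `Sum.inl l ↦ x_l`, `Sum.inr l ↦ y_l`. -/
abbrev Pol (N : ℕ) := MvPolynomial (Fin N ⊕ Fin N) ℝ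

/-- Poisson bracket `{f,g} = Σ_l (∂f/∂x_l ∂g/∂y_l − ∂f/∂y_l ∂g/∂x_l)`. -/
noncomputable def pbracket {N : ℕ} (f g : Pol N) : Pol N :=
  ∑ l : Fin N,
    (pderiv (Sum.inl l) f * pderiv (Sum.inr l) g -
      pderiv (Sum.inr l) f * pderiv (Sum.inl l) g)

/-- Polynomial norm: the sum of the absolute values of the coefficients. -/
noncomputable def pnorm {N : ℕ} (f : Pol N) : ℝ :=
  ∑ d ∈ f.support, |coeff d f|

/-- Action of the cyclic permutation `τ` on polynomials: `(τ f)(x,y) = f(τx, τy)`. -/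
noncomputable def cshiftP {N : ℕ} (f : Pol N) : Pol N :=
  rename (Sum.map (finRotate N : Fin N → Fin N) (finRotate N : Fin N → Fin N)) f

/-- The extensive function generated by a seed: `f^⊕ = Σ_{l=1}^N τ^l f`. -/
noncomputable def oplus {N : ℕ} (f : Pol N) : Pol N :=
  ∑ l ∈ Finset.Icc 1 N, cshiftP^[l] f

/-!
Both estimates rest on `‖p q‖ ≤ ‖p‖ ‖q‖` and on the Euler-type bound `Σ_v ‖∂_v f‖ ≤ r ‖f‖` for
`f` homogeneous of degree `r`: the exponents of a monomial of degree `r` add up to `r`. For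
`{f, g^⊕}` it then suffices that every `∂_v g^⊕` still has norm at most `s ‖g‖`; this holds since
`∂_v (τ^k g)` is a relabelling of `∂_{τ^{-k} v} g`, and over one period the variables `τ^{-k} v`
are pairwise distinct. The seed identity holds because `τ` permutes the conjugate pairs
`(x_l, y_l)`, hence commutes with the bracket, and `g^⊕` is `τ`-invariant.
-/

open Finset

section Homogeneous

variable {σ R : Type*} [CommSemiring R] {f g : MvPolynomial σ R} {r s : ℕ}

lemma pderiv_eq_zero_of_isHomogeneous_zero (hf : f.IsHomogeneous 0) (i : σ) :
    pderiv i f = 0 := by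
  rw [← totalDegree_zero_iff_isHomogeneous, totalDegree_eq_zero_iff_eq_C] at hf
  rw [hf, pderiv_C]

lemma isHomogeneous_pderiv_mul_pderiv (hf : f.IsHomogeneous r) (hg : g.IsHomogeneous s)
    (i j : σ) : (pderiv i f * pderiv j g).IsHomogeneous (r + s - 2) := by
  rcases r with _ | r
  · simp [pderiv_eq_zero_of_isHomogeneous_zero hf, isHomogeneous_zero]
  rcases s with _ | s
  · simp [pderiv_eq_zero_of_isHomogeneous_zero hg, isHomogeneous_zero]
  convert hf.pderiv.mul hg.pderiv using 1
  omega

end Homogeneous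

lemma Finset.sum_range_add_one_eq_sum_range {M : Type*} [AddCancelCommMonoid M] {F : ℕ → M}
    {n : ℕ} (h : F n = F 0) : ∑ k ∈ range n, F (k + 1) = ∑ k ∈ range n, F k :=
  add_right_cancel (b := F 0) (by rw [← sum_range_succ', sum_range_succ, h])

lemma finRotate_iterate_self (n : ℕ) : (finRotate n)^[n] = id := by
  rcases n with _ | n
  · rfl
  have h := finCycle_eq_finRotate_iterate (k := Fin.last n)
  rw [Fin.val_last] at h
  funext i
  rw [Function.iterate_succ_apply', ← h, finCycle_apply, finRotate_apply, add_assoc,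
    Fin.last_add_one, add_zero, id]

lemma sumCongr_finCycle_symm_apply_injective {n : ℕ} (v : Fin n ⊕ Fin n) :
    Function.Injective fun k : Fin n => (Equiv.sumCongr (finCycle k) (finCycle k)).symm v := by
  intro k k' h
  have := k.neZero
  cases v <;> simpa using h

section PhaseSpace

variable {N : ℕ}

lemma pnorm_eq_sum_of_support_subset (f : Pol N) {S : Finset ((Fin N ⊕ Fin N) →₀ ℕ)}
    (h : f.support ⊆ S) : pnorm f = ∑ d ∈ S, |coeff d f| :=
  sum_subset h fun d _ hd => by rw [notMem_support_iff.mp hd, abs_zero]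

lemma pnorm_nonneg (f : Pol N) : 0 ≤ pnorm f :=
  sum_nonneg fun _ _ => abs_nonneg _

@[simp] lemma pnorm_zero : pnorm (0 : Pol N) = 0 := by simp [pnorm]

@[simp] lemma pnorm_neg (f : Pol N) : pnorm (-f) = pnorm f := by
  simp [pnorm]

lemma pnorm_add_le (f g : Pol N) : pnorm (f + g) ≤ pnorm f + pnorm g := by
  classical
  set S := f.support ∪ g.support ∪ (f + g).support
  rw [pnorm_eq_sum_of_support_subset (f + g) (S := S) (by intro d; simp_all [S]),
    pnorm_eq_sum_of_support_subset f (S := S) (by intro d; simp_all [S]),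
    pnorm_eq_sum_of_support_subset g (S := S) (by intro d; simp_all [S]), ← sum_add_distrib]
  exact sum_le_sum fun d _ => by rw [coeff_add]; exact abs_add_le _ _

lemma pnorm_sub_le (f g : Pol N) : pnorm (f - g) ≤ pnorm f + pnorm g := by
  simpa only [sub_eq_add_neg, pnorm_neg] using pnorm_add_le f (-g)

lemma pnorm_sum_le {ι : Type*} (s : Finset ι) (f : ι → Pol N) :
    pnorm (∑ i ∈ s, f i) ≤ ∑ i ∈ s, pnorm (f i) :=
  le_sum_of_subadditive pnorm pnorm_zero.le pnorm_add_le s f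

lemma pnorm_monomial (a : (Fin N ⊕ Fin N) →₀ ℕ) (c : ℝ) : pnorm (monomial a c) = |c| := by
  classical
  rw [pnorm_eq_sum_of_support_subset _ support_monomial_subset]
  simp

lemma pnorm_mul_le (f g : Pol N) : pnorm (f * g) ≤ pnorm f * pnorm g := by
  conv_lhs => rw [f.as_sum, g.as_sum, sum_mul_sum]
  refine (pnorm_sum_le _ _).trans ?_
  rw [pnorm, pnorm, sum_mul_sum]
  refine sum_le_sum fun a _ => (pnorm_sum_le _ _).trans (sum_le_sum fun b _ => ?_)
  rw [monomial_mul, pnorm_monomial, abs_mul]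

lemma pnorm_rename {φ : Fin N ⊕ Fin N → Fin N ⊕ Fin N} (hφ : Function.Injective φ)
    (f : Pol N) : pnorm (rename φ f) = pnorm f := by
  classical
  rw [pnorm, support_rename_of_injective hφ,
    sum_image fun a _ b _ hab => Finsupp.mapDomain_injective hφ hab, pnorm]
  exact sum_congr rfl fun d _ => by rw [coeff_rename_mapDomain φ hφ]

lemma pnorm_pderiv_le (f : Pol N) (v : Fin N ⊕ Fin N) :
    pnorm (pderiv v f) ≤ ∑ a ∈ f.support, |coeff a f| * a v := by
  conv_lhs => rw [f.as_sum, map_sum]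
  refine (pnorm_sum_le _ _).trans (sum_le_sum fun a _ => ?_)
  rw [pderiv_monomial, pnorm_monomial, abs_mul, Nat.abs_cast]

lemma sum_pnorm_pderiv_le {f : Pol N} {r : ℕ} (hf : f.IsHomogeneous r) :
    ∑ v, pnorm (pderiv v f) ≤ r * pnorm f := by
  refine (sum_le_sum fun v _ => pnorm_pderiv_le f v).trans_eq ?_
  rw [sum_comm, pnorm, mul_sum]
  refine sum_congr rfl fun a ha => ?_
  rw [← mul_sum, ← Nat.cast_sum, ← Finsupp.degree_eq_sum, Finsupp.degree_apply,
    ← hf.degree_eq_sum_deg_support ha, mul_comm]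

lemma pnorm_pderiv_le_of_isHomogeneous {f : Pol N} {r : ℕ} (hf : f.IsHomogeneous r)
    (v : Fin N ⊕ Fin N) : pnorm (pderiv v f) ≤ r * pnorm f :=
  (single_le_sum (fun w _ => pnorm_nonneg (pderiv w f)) (mem_univ v)).trans
    (sum_pnorm_pderiv_le hf)

lemma isHomogeneous_pbracket {f g : Pol N} {r s : ℕ} (hf : f.IsHomogeneous r)
    (hg : g.IsHomogeneous s) : (pbracket f g).IsHomogeneous (r + s - 2) :=
  IsHomogeneous.sum _ _ _ fun _ _ =>
    (isHomogeneous_pderiv_mul_pderiv hf hg _ _).sub (isHomogeneous_pderiv_mul_pderiv hf hg _ _)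

lemma pnorm_pbracket_le (f G : Pol N) {B : ℝ} (hG : ∀ v, pnorm (pderiv v G) ≤ B) :
    pnorm (pbracket f G) ≤ (∑ v, pnorm (pderiv v f)) * B := by
  have hterm (l : Fin N) :
      pnorm (pderiv (Sum.inl l) f * pderiv (Sum.inr l) G -
        pderiv (Sum.inr l) f * pderiv (Sum.inl l) G)
      ≤ pnorm (pderiv (Sum.inl l) f) * B + pnorm (pderiv (Sum.inr l) f) * B :=
    (pnorm_sub_le _ _).trans <| add_le_add
      ((pnorm_mul_le _ _).trans (mul_le_mul_of_nonneg_left (hG _) (pnorm_nonneg _)))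
      ((pnorm_mul_le _ _).trans (mul_le_mul_of_nonneg_left (hG _) (pnorm_nonneg _)))
  refine (pnorm_sum_le _ _).trans ((sum_le_sum fun l _ => hterm l).trans_eq ?_)
  rw [sum_mul, Fintype.sum_sum_type, sum_add_distrib]

lemma pnorm_pbracket_le_of_isHomogeneous {f G : Pol N} {r : ℕ} (hf : f.IsHomogeneous r)
    {B : ℝ} (hB : 0 ≤ B) (hG : ∀ v, pnorm (pderiv v G) ≤ B) :
    pnorm (pbracket f G) ≤ r * pnorm f * B :=
  (pnorm_pbracket_le f G hG).trans (mul_le_mul_of_nonneg_right (sum_pnorm_pderiv_le hf) hB)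

lemma rename_sumMap_pbracket (e : Equiv.Perm (Fin N)) (p q : Pol N) :
    rename (Sum.map e e) (pbracket p q) =
      pbracket (rename (Sum.map e e) p) (rename (Sum.map e e) q) := by
  have he : Function.Injective (Sum.map e e) := e.injective.sumMap e.injective
  simp only [pbracket, map_sum, map_sub, map_mul, ← pderiv_rename he, Sum.map_inl, Sum.map_inr]
  exact Fintype.sum_equiv e _ _ fun _ => rfl

lemma cshiftP_iterate_pbracket (k : ℕ) (p q : Pol N) :
    cshiftP^[k] (pbracket p q) = pbracket (cshiftP^[k] p) (cshiftP^[k] q) := by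
  induction k generalizing p q with
  | zero => rfl
  | succ k ih => simp only [Function.iterate_succ_apply, cshiftP, rename_sumMap_pbracket, ih]

lemma cshiftP_sum {ι : Type*} (s : Finset ι) (f : ι → Pol N) :
    cshiftP (∑ i ∈ s, f i) = ∑ i ∈ s, cshiftP (f i) :=
  map_sum _ _ _

lemma cshiftP_iterate (k : ℕ) (f : Pol N) :
    cshiftP^[k] f = rename (Sum.map (finRotate N)^[k] (finRotate N)^[k]) f := by
  induction k with
  | zero => simp
  | succ k ih =>
    rw [Function.iterate_succ_apply', ih, cshiftP, rename_rename, Sum.map_comp_map,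
      ← Function.iterate_succ']

lemma cshiftP_iterate_self (f : Pol N) : cshiftP^[N] f = f := by
  rw [cshiftP_iterate, finRotate_iterate_self, Sum.map_id_id, rename_id_apply]

lemma oplus_eq_sum_range_add_one (f : Pol N) :
    oplus f = ∑ k ∈ range N, cshiftP^[k + 1] f := by
  rw [oplus, ← Ico_add_one_right_eq_Icc, sum_Ico_eq_sum_range]
  simp [add_comm]

lemma oplus_eq_sum_range (f : Pol N) : oplus f = ∑ k ∈ range N, cshiftP^[k] f := by
  rw [oplus_eq_sum_range_add_one,
    sum_range_add_one_eq_sum_range (F := fun k => cshiftP^[k] f) (cshiftP_iterate_self f)]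

lemma cshiftP_oplus (f : Pol N) : cshiftP (oplus f) = oplus f := by
  conv_lhs => rw [oplus_eq_sum_range, cshiftP_sum]
  rw [oplus_eq_sum_range_add_one]
  simp only [Function.iterate_succ_apply']

lemma pbracket_sum_left {ι : Type*} (s : Finset ι) (p : ι → Pol N) (q : Pol N) :
    pbracket (∑ i ∈ s, p i) q = ∑ i ∈ s, pbracket (p i) q := by
  simp only [pbracket, map_sum, sum_mul, ← sum_sub_distrib]
  exact sum_comm

lemma oplus_pbracket_oplus (f g : Pol N) :
    oplus (pbracket f (oplus g)) = pbracket (oplus f) (oplus g) :=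
  calc oplus (pbracket f (oplus g))
      = ∑ l ∈ Icc 1 N, pbracket (cshiftP^[l] f) (oplus g) := sum_congr rfl fun l _ => by
        rw [cshiftP_iterate_pbracket, Function.iterate_fixed (cshiftP_oplus g)]
    _ = pbracket (oplus f) (oplus g) := (pbracket_sum_left _ _ _).symm

lemma oplus_eq_sum_finCycle (f : Pol N) :
    oplus f = ∑ k : Fin N, rename (Equiv.sumCongr (finCycle k) (finCycle k)) f := by
  rw [oplus_eq_sum_range, ← Fin.sum_univ_eq_sum_range]
  refine sum_congr rfl fun k _ => ?_
  rw [cshiftP_iterate, ← finCycle_eq_finRotate_iterate]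
  rfl

lemma pnorm_pderiv_rename (e : Equiv.Perm (Fin N ⊕ Fin N)) (v : Fin N ⊕ Fin N) (f : Pol N) :
    pnorm (pderiv v (rename e f)) = pnorm (pderiv (e.symm v) f) := by
  conv_lhs => rw [← e.apply_symm_apply v]
  rw [pderiv_rename e.injective, pnorm_rename e.injective]

lemma pnorm_pderiv_oplus_le {g : Pol N} {s : ℕ} (hg : g.IsHomogeneous s)
    (v : Fin N ⊕ Fin N) : pnorm (pderiv v (oplus g)) ≤ s * pnorm g :=
  calc pnorm (pderiv v (oplus g))
      ≤ ∑ k : Fin N, pnorm (pderiv v (rename (Equiv.sumCongr (finCycle k) (finCycle k)) g)) := by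
        rw [oplus_eq_sum_finCycle, map_sum]
        exact pnorm_sum_le _ _
    _ = ∑ w ∈ univ.map ⟨_, sumCongr_finCycle_symm_apply_injective v⟩, pnorm (pderiv w g) := by
        simp only [sum_map, Function.Embedding.coeFn_mk, pnorm_pderiv_rename]
    _ ≤ ∑ w, pnorm (pderiv w g) := sum_le_univ_sum_of_nonneg fun w => pnorm_nonneg _
    _ ≤ s * pnorm g := sum_pnorm_pderiv_le hg

end PhaseSpace

theorem stmt3 (N : ℕ) (r s : ℕ) (f g : Pol N)
    (hf : f.IsHomogeneous r) (hg : g.IsHomogeneous s) :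
    (pbracket f g).IsHomogeneous (r + s - 2) ∧
    pnorm (pbracket f g) ≤ (r : ℝ) * s * pnorm f * pnorm g ∧
    oplus (pbracket f (oplus g)) = pbracket (oplus f) (oplus g) ∧
    pnorm (pbracket f (oplus g)) ≤ (r : ℝ) * s * pnorm f * pnorm g := by
  have hB : 0 ≤ (s : ℝ) * pnorm g := mul_nonneg s.cast_nonneg (pnorm_nonneg g)
  rw [show (r : ℝ) * s * pnorm f * pnorm g = r * pnorm f * (s * pnorm g) by ring]
  exact ⟨isHomogeneous_pbracket hf hg,
    pnorm_pbracket_le_of_isHomogeneous hf hB (pnorm_pderiv_le_of_isHomogeneous hg),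
    oplus_pbracket_oplus f g,
    pnorm_pbracket_le_of_isHomogeneous hf hB (pnorm_pderiv_oplus_le hg)⟩
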